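/- arXiv:1103.5575 — 2 statements merged into one kernel-verified Lean document; each statement's English description precedes it below -/
import Mathlib

section
/- Let η be a Borel measure on ℝ, y₀ ∈ ℝ, and f : ℝ × ℝ → ℝ be such that (i) there is ε > 0 so that for every y with |y − y₀| < ε the function x ↦ f(x,y) is measurable and ∫_ℝ |f(x,y)| dη(x) < ∞, and (ii) for every x ∈ ℝ the function y ↦ f(x,y) is concave and differentiable on ℝ. Then the function k(y) := ∫_ℝ f(x,y) dη(x) is finite and concave on (y₀ − ε, y₀ + ε), the function x ↦ ∂f/∂y(x, y₀) is η-integrable, k is differentiable at y₀, and k′(y₀) = ∫_ℝ ∂f/∂y(x, y₀) dη(x). -/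
/-! Concavity passes to the integral by integrating the pointwise concavity inequality. For the
derivative, fix `a < b < y₀ < c < d` in the integrability range: for `y ∈ (b, c)` concavity traps
`∂f/∂y(x, y)` between the chord slopes of `f x` on `[c, d]` and on `[a, b]`, which are integrable
in `x`. This gives an integrable dominating function, and differentiation under the integral sign
applies. -/

open MeasureTheory Set Filter
open scoped Topology

variable {α : Type*} [MeasurableSpace α] {μ : Measure α}

theorem concaveOn_integral {E : Type*} [AddCommGroup E] [Module ℝ E] {s : Set E}
    {f : α → E → ℝ} (hs : Convex ℝ s) (hconc : ∀ᵐ x ∂μ, ConcaveOn ℝ s (f x))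
    (hint : ∀ y ∈ s, Integrable (fun x => f x y) μ) :
    ConcaveOn ℝ s (fun y => ∫ x, f x y ∂μ) := by
  refine ⟨hs, fun y₁ h₁ y₂ h₂ a b ha hb hab => ?_⟩
  have i₁ : Integrable (fun x => a • f x y₁) μ := (hint y₁ h₁).smul a
  have i₂ : Integrable (fun x => b • f x y₂) μ := (hint y₂ h₂).smul b
  calc a • ∫ x, f x y₁ ∂μ + b • ∫ x, f x y₂ ∂μ
      = ∫ x, (a • f x y₁ + b • f x y₂) ∂μ := by
        rw [integral_add i₁ i₂, integral_smul, integral_smul]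
    _ ≤ ∫ x, f x (a • y₁ + b • y₂) ∂μ := by
        refine integral_mono_ae (i₁.add i₂) (hint _ (hs h₁ h₂ ha hb hab)) ?_
        filter_upwards [hconc] with x hx using hx.2 h₁ h₂ ha hb hab

section slope

variable {𝕜 F : Type*} [NontriviallyNormedField 𝕜] [NormedAddCommGroup F] [NormedSpace 𝕜 F]
  {f : α → 𝕜 → F}

theorem MeasureTheory.Integrable.slope {a b : 𝕜} (ha : Integrable (fun x => f x a) μ)
    (hb : Integrable (fun x => f x b) μ) : Integrable (fun x => slope (f x) a b) μ := by
  simp_rw [slope_def_module]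
  exact (hb.sub ha).smul _

theorem MeasureTheory.AEStronglyMeasurable.slope {a b : 𝕜}
    (ha : AEStronglyMeasurable (fun x => f x a) μ)
    (hb : AEStronglyMeasurable (fun x => f x b) μ) :
    AEStronglyMeasurable (fun x => slope (f x) a b) μ := by
  simp_rw [slope_def_module]
  exact (hb.sub ha).const_smul _

/-- `deriv (f x) y₀` is the a.e. limit of `slope (f x) y₀ (v n)` along a sequence `v n → y₀`,
`v n ≠ y₀`, chosen inside the neighbourhood where `f · y` is measurable. -/
theorem aestronglyMeasurable_deriv_of_eventually {y₀ : 𝕜}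
    (hmeas : ∀ᶠ y in 𝓝 y₀, AEStronglyMeasurable (fun x => f x y) μ)
    (hdiff : ∀ᵐ x ∂μ, DifferentiableAt 𝕜 (f x) y₀) :
    AEStronglyMeasurable (fun x => deriv (f x) y₀) μ := by
  obtain ⟨u, hu⟩ := (𝓝[≠] y₀).exists_seq_tendsto
  obtain ⟨N, hN⟩ :=
    ((tendsto_nhds_of_tendsto_nhdsWithin hu).eventually hmeas).exists_forall_of_atTop
  have hv : Tendsto (fun n => u (n + N)) atTop (𝓝[≠] y₀) := (tendsto_add_atTop_iff_nat N).2 hu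
  refine aestronglyMeasurable_of_tendsto_ae atTop
    (fun n => (hmeas.self_of_nhds).slope (hN (n + N) (Nat.le_add_left N n))) ?_
  filter_upwards [hdiff] with x hx
  exact (hasDerivAt_iff_tendsto_slope.1 hx.hasDerivAt).comp hv

end slope

theorem ConcaveOn.abs_deriv_le {g : ℝ → ℝ} {S : Set ℝ} (hg : ConcaveOn ℝ S g)
    (hdiff : ∀ y ∈ S, DifferentiableAt ℝ g y) {a b c d y : ℝ} (ha : a ∈ S) (hd : d ∈ S)
    (hab : a < b) (hby : b ≤ y) (hyc : y ≤ c) (hcd : c < d) :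
    |deriv g y| ≤ |slope g a b| + |slope g c d| := by
  have hIcc := hg.1.ordConnected.out ha hd
  have hb : b ∈ S := hIcc ⟨hab.le, by linarith⟩
  have hc : c ∈ S := hIcc ⟨by linarith, hcd.le⟩
  have hy : y ∈ S := hIcc ⟨by linarith, by linarith⟩
  have hanti := hg.antitoneOn_deriv hdiff
  have upper : deriv g y ≤ slope g a b :=
    (hanti hb hy hby).trans (hg.deriv_le_slope ha hb hab (hdiff b hb))
  have lower : slope g c d ≤ deriv g y :=
    (hg.slope_le_deriv hc hd hcd (hdiff c hc)).trans (hanti hy hc hyc)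
  rw [abs_le]
  constructor <;> linarith [neg_abs_le (slope g c d), le_abs_self (slope g a b),
    abs_nonneg (slope g a b), abs_nonneg (slope g c d)]

theorem hasDerivAt_integral_of_concaveOn {f : α → ℝ → ℝ} {y₀ : ℝ} {S : Set ℝ} (hS : S ∈ 𝓝 y₀)
    (hconc : ∀ᵐ x ∂μ, ConcaveOn ℝ S (f x))
    (hdiff : ∀ᵐ x ∂μ, ∀ y ∈ S, DifferentiableAt ℝ (f x) y)
    (hint : ∀ y ∈ S, Integrable (fun x => f x y) μ) :
    Integrable (fun x => deriv (f x) y₀) μ ∧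
      HasDerivAt (fun y => ∫ x, f x y ∂μ) (∫ x, deriv (f x) y₀ ∂μ) y₀ := by
  obtain ⟨l, u, ⟨hl, hu⟩, hlu⟩ := mem_nhds_iff_exists_Ioo_subset.1 hS
  obtain ⟨a, hla, hay⟩ := exists_between hl
  obtain ⟨b, hab, hby⟩ := exists_between hay
  obtain ⟨d, hyd, hdu⟩ := exists_between hu
  obtain ⟨c, hyc, hcd⟩ := exists_between hyd
  have hIcc : Icc a d ⊆ S := fun y hy => hlu ⟨hla.trans_le hy.1, hy.2.trans_lt hdu⟩
  have ha : a ∈ S := hIcc ⟨le_rfl, by linarith⟩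
  have hb : b ∈ S := hIcc ⟨by linarith, by linarith⟩
  have hc : c ∈ S := hIcc ⟨by linarith, by linarith⟩
  have hd : d ∈ S := hIcc ⟨by linarith, le_rfl⟩
  have hmeas : ∀ᶠ y in 𝓝 y₀, AEStronglyMeasurable (fun x => f x y) μ :=
    eventually_of_mem hS fun y hy => (hint y hy).aestronglyMeasurable
  have hmeas_deriv : AEStronglyMeasurable (fun x => deriv (f x) y₀) μ :=
    aestronglyMeasurable_deriv_of_eventually hmeas
      (hdiff.mono fun x hx => hx y₀ (mem_of_mem_nhds hS))
  have hbound_int : Integrable (fun x => |slope (f x) a b| + |slope (f x) c d|) μ :=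
    ((hint a ha).slope (hint b hb)).abs.add ((hint c hc).slope (hint d hd)).abs
  have hbound : ∀ᵐ x ∂μ, ∀ y ∈ Ioo b c,
      ‖deriv (f x) y‖ ≤ |slope (f x) a b| + |slope (f x) c d| := by
    filter_upwards [hconc, hdiff] with x hcx hdx y hy
    exact hcx.abs_deriv_le hdx ha hd hab hy.1.le hy.2.le hcd
  have hderiv : ∀ᵐ x ∂μ, ∀ y ∈ Ioo b c, HasDerivAt (f x) (deriv (f x) y) y := by
    filter_upwards [hdiff] with x hdx y hy
    exact (hdx y (hIcc ⟨by linarith [hy.1], by linarith [hy.2]⟩)).hasDerivAt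
  exact hasDerivAt_integral_of_dominated_loc_of_deriv_le (Ioo_mem_nhds hby hyc) hmeas
    (hint y₀ (mem_of_mem_nhds hS)) hmeas_deriv hbound hbound_int hderiv

theorem stmt4 (η : Measure ℝ) (y₀ ε : ℝ) (hε : 0 < ε) (f : ℝ → ℝ → ℝ)
    (hint : ∀ y, |y - y₀| < ε → Integrable (fun x => f x y) η)
    (hconc : ∀ x : ℝ, ConcaveOn ℝ Set.univ (f x))
    (hdiff : ∀ x : ℝ, Differentiable ℝ (f x)) :
    ConcaveOn ℝ (Ioo (y₀ - ε) (y₀ + ε)) (fun y => ∫ x, f x y ∂η) ∧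
    Integrable (fun x => deriv (f x) y₀) η ∧
    HasDerivAt (fun y => ∫ x, f x y ∂η) (∫ x, deriv (f x) y₀ ∂η) y₀ := by
  have hint' : ∀ y ∈ Ioo (y₀ - ε) (y₀ + ε), Integrable (fun x => f x y) η := fun y hy =>
    hint y (abs_sub_lt_iff.2 ⟨by linarith [hy.2], by linarith [hy.1]⟩)
  have hconc' : ∀ᵐ x ∂η, ConcaveOn ℝ (Ioo (y₀ - ε) (y₀ + ε)) (f x) :=
    ae_of_all η fun x => (hconc x).subset (subset_univ _) (convex_Ioo _ _)
  exact ⟨concaveOn_integral (convex_Ioo _ _) hconc' hint',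
    hasDerivAt_integral_of_concaveOn (Ioo_mem_nhds (by linarith) (by linarith)) hconc'
      (ae_of_all η fun x y _ => hdiff x y) hint'⟩
end

section
/- Let 0 < p_a < p_b, b ∈ ℝ, c ≥ 0, and let F be a Lévy measure on ℝ with F((−∞,−1]) = 0 such that ∫_{(1,∞)} x dF(x) < ∞ and ∫_{(1,∞)} (1+x)^{1−q} dF(x) < ∞ for every q ∈ (p_a, p_b). Define G(π,p) := πb − pπ²c + ∫_{(−1,∞)} (πx(1+πx)^{−p} − πx) dF(x). Then for every π₀ ≠ 0 in the interior of A := {π ∈ ℝ : F({x : 1 + πx ≤ 0}) = 0}, the map p ↦ G(π₀,p) is differentiable on (p_a, p_b) with derivative −π₀²c − ∫_{(−1,∞)} π₀x (1+π₀x)^{−p} log(1+π₀x) dF(x); this derivative is ≤ −π₀²c, and in particular strictly negative when c > 0. -/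
open MeasureTheory Set Filter
open scoped ENNReal Topology

/-!
As `π₀` is interior to `A`, also `tπ₀ ∈ A` for some `t > 1`, and writing `1 + π₀x` as a convex
combination of `1` and `1 + tπ₀x` shows `1 + π₀x ≥ δ := 1 - 1/t` for `F`-a.e. `x`. On
`{u ≥ δ}` one has `|log u| ≤ |u - 1|/δ`, so the `p`-derivative `-π₀x (1+π₀x)^(-p) log(1+π₀x)`
of the integrand is `O(x²)`, uniformly in the exponent near `p`; this controls small jumps, and
large jumps when `π₀ < 0` (then `|π₀x| ≤ 1`). For `π₀ > 0` and `x > 1`, `log u ≤ u^ε/ε` bounds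
it by a multiple of `(1+x)^(1-q)` with `pa < q < p`. Differentiation under the integral sign
then applies, and the sign of the derivative comes from `t log(1+t) ≥ 0` for `t > -1`.
-/

namespace Real

lemma abs_log_le_abs_sub_one_div {δ u : ℝ} (hδ : 0 < δ) (hδ1 : δ ≤ 1) (hu : δ ≤ u) :
    |log u| ≤ |u - 1| / δ := by
  have hu0 : 0 < u := hδ.trans_le hu
  rw [le_div_iff₀ hδ]
  rcases le_total 1 u with h | h
  · rw [abs_of_nonneg (log_nonneg h), abs_of_nonneg (sub_nonneg.2 h)]
    nlinarith [log_le_sub_one_of_pos hu0, log_nonneg h]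
  · rw [abs_of_nonpos (log_nonpos hu0.le h), abs_of_nonpos (sub_nonpos.2 h)]
    have h' : (1 - u⁻¹) * u = u - 1 := by field_simp
    nlinarith [one_sub_inv_le_log_of_pos hu0, log_nonpos hu0.le h]

lemma rpow_le_rpow_add_rpow {a b u : ℝ} (ha : 0 < a) (hau : a ≤ u) (hub : u ≤ b) (s : ℝ) :
    u ^ s ≤ a ^ s + b ^ s := by
  have hu : 0 < u := ha.trans_le hau
  rcases le_total 0 s with hs | hs
  · linarith [rpow_le_rpow hu.le hub hs, rpow_nonneg ha.le s]
  · linarith [rpow_le_rpow_of_nonpos ha hau hs, rpow_nonneg (hu.trans_le hub).le s]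

lemma one_add_mul_rpow_le {t x : ℝ} (ht : 0 < t) (hx : 0 ≤ x) (s : ℝ) :
    (1 + t * x) ^ s ≤ ((min 1 t) ^ s + (max 1 t) ^ s) * (1 + x) ^ s := by
  have hx1 : 0 < 1 + x := by linarith
  have hlow : min 1 t * (1 + x) ≤ 1 + t * x := by
    nlinarith [min_le_left 1 t, min_le_right 1 t]
  have hupp : 1 + t * x ≤ max 1 t * (1 + x) := by
    nlinarith [le_max_left 1 t, le_max_right 1 t]
  calc (1 + t * x) ^ s ≤ (min 1 t * (1 + x)) ^ s + (max 1 t * (1 + x)) ^ s :=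
        rpow_le_rpow_add_rpow (mul_pos (lt_min one_pos ht) hx1) hlow hupp s
    _ = _ := by
        rw [mul_rpow (lt_min one_pos ht).le hx1.le, mul_rpow (by positivity) hx1.le, add_mul]

lemma mul_log_one_add_nonneg {y : ℝ} (hy : -1 < y) : 0 ≤ y * log (1 + y) := by
  rcases le_total 0 y with h | h
  · exact mul_nonneg h (log_nonneg (by linarith))
  · exact mul_nonneg_of_nonpos_of_nonpos h (log_nonpos (by linarith) (by linarith))

end Real

lemma hasDerivAt_mul_rpow_neg_sub {y : ℝ} (hy : 0 < 1 + y) (r : ℝ) :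
    HasDerivAt (fun s => y * (1 + y) ^ (-s) - y) (-(y * (1 + y) ^ (-r) * Real.log (1 + y))) r := by
  have h := (((Real.hasStrictDerivAt_const_rpow hy (-r)).hasDerivAt.comp r
    (hasDerivAt_neg r)).const_mul y).sub_const y
  exact h.congr_deriv (by ring)

lemma abs_mul_rpow_neg_mul_log_le_sq {δ y r R : ℝ} (hδ : 0 < δ) (hδ1 : δ ≤ 1)
    (hy : δ ≤ 1 + y) (hr : 0 ≤ r) (hrR : r ≤ R) :
    |y * (1 + y) ^ (-r) * Real.log (1 + y)| ≤ δ ^ (-R - 1) * y ^ 2 := by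
  have hpow : (1 + y) ^ (-r) ≤ δ ^ (-R) :=
    (Real.rpow_le_rpow_of_nonpos hδ hy (by linarith)).trans
      (Real.rpow_le_rpow_of_exponent_ge hδ hδ1 (by linarith))
  have hlog : |Real.log (1 + y)| ≤ |y| / δ := by
    simpa using Real.abs_log_le_abs_sub_one_div hδ hδ1 hy
  rw [abs_mul, abs_mul, abs_of_nonneg (Real.rpow_nonneg (hδ.le.trans hy) _),
    Real.rpow_sub_one hδ.ne', ← sq_abs y]
  calc |y| * (1 + y) ^ (-r) * |Real.log (1 + y)| ≤ |y| * δ ^ (-R) * (|y| / δ) := by gcongr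
    _ = δ ^ (-R) / δ * |y| ^ 2 := by ring

lemma abs_mul_rpow_neg_sub_le_sq {δ y p : ℝ} (hδ : 0 < δ) (hδ1 : δ ≤ 1)
    (hy : δ ≤ 1 + y) (hp : 0 ≤ p) :
    |y * (1 + y) ^ (-p) - y| ≤ p * δ ^ (-p - 1) * y ^ 2 := by
  have h := norm_image_sub_le_of_norm_deriv_le_segment' (a := 0) (b := p)
    (f := fun s => y * (1 + y) ^ (-s) - y) (C := δ ^ (-p - 1) * y ^ 2)
    (fun s _ => (hasDerivAt_mul_rpow_neg_sub (hδ.trans_le hy) s).hasDerivWithinAt)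
    (fun s hs => by
      rw [Real.norm_eq_abs, abs_neg]
      exact abs_mul_rpow_neg_mul_log_le_sq hδ hδ1 hy hs.1 hs.2.le) p ⟨hp, le_rfl⟩
  simpa [Real.norm_eq_abs, mul_comm p, mul_assoc] using h

lemma abs_mul_rpow_neg_mul_log_le_rpow {y q r ε : ℝ} (hy : 0 ≤ y) (hε : 0 < ε)
    (hr : q + ε ≤ r) :
    |y * (1 + y) ^ (-r) * Real.log (1 + y)| ≤ (1 + y) ^ (1 - q) / ε := by
  have hy1 : 1 ≤ 1 + y := by linarith
  have hu : 0 < 1 + y := by linarith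
  have hlog : Real.log (1 + y) ≤ (1 + y) ^ ε / ε := Real.log_le_rpow_div hu.le hε
  have hpow : (1 + y) ^ (-r) ≤ (1 + y) ^ (1 - q - ε - 1) :=
    Real.rpow_le_rpow_of_exponent_le hy1 (by linarith)
  rw [abs_of_nonneg (mul_nonneg (mul_nonneg hy (Real.rpow_nonneg hu.le _)) (Real.log_nonneg hy1))]
  calc y * (1 + y) ^ (-r) * Real.log (1 + y)
      ≤ (1 + y) * (1 + y) ^ (1 - q - ε - 1) * ((1 + y) ^ ε / ε) := by
        gcongr
        · exact Real.log_nonneg hy1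
        · linarith
    _ = (1 + y) ^ (1 - q) / ε := by
        rw [Real.rpow_sub_one hu.ne', mul_div_cancel₀ _ hu.ne', mul_div_assoc',
          ← Real.rpow_add hu]
        ring_nf

lemma abs_mul_rpow_neg_sub_le_self {y p : ℝ} (hy : 0 ≤ y) (hp : 0 ≤ p) :
    |y * (1 + y) ^ (-p) - y| ≤ y := by
  have hy1 : 1 ≤ 1 + y := by linarith
  have hpow : (1 + y) ^ (-p) ≤ 1 := Real.rpow_le_one_of_one_le_of_nonpos hy1 (by linarith)
  have hpow0 : 0 ≤ (1 + y) ^ (-p) := Real.rpow_nonneg (by linarith) _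
  rw [abs_of_nonpos (by nlinarith)]
  nlinarith

lemma exists_pos_le_one_add_mul_ae {F : Measure ℝ} {π₀ : ℝ}
    (h : π₀ ∈ interior {π : ℝ | F {x | 1 + π * x ≤ 0} = 0}) :
    ∃ δ, 0 < δ ∧ δ ≤ 1 ∧ ∀ᵐ x ∂F, δ ≤ 1 + π₀ * x := by
  have hev : ∀ᶠ t in 𝓝[>] (1 : ℝ), F {x | 1 + t * π₀ * x ≤ 0} = 0 := by
    have hcont : Tendsto (fun t : ℝ => t * π₀) (𝓝 1) (𝓝 π₀) := by
      simpa using (continuous_mul_const π₀).tendsto 1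
    exact nhdsWithin_le_nhds (hcont.eventually (mem_interior_iff_mem_nhds.1 h))
  obtain ⟨t, hA, ht⟩ := (hev.and self_mem_nhdsWithin).exists
  have ht0 : 0 < t := zero_lt_one.trans ht
  have hpos : ∀ᵐ x ∂F, 0 < 1 + t * π₀ * x := by
    rw [ae_iff]
    simpa only [not_lt] using hA
  refine ⟨1 - t⁻¹, by simpa using inv_lt_one_of_one_lt₀ ht, by simpa using ht0.le,
    hpos.mono fun x hx => ?_⟩
  have hcomb : 1 + π₀ * x = (1 - t⁻¹) + t⁻¹ * (1 + t * π₀ * x) := by field_simp; ring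
  rw [hcomb]
  exact le_add_of_nonneg_right (by positivity)

lemma le_mul_min_sq_one_add_indicator {π x a C : ℝ} {g : ℝ → ℝ} (hx : -1 < x)
    (hu : 0 ≤ 1 + π * x) (hC : 0 ≤ C) (hg : ∀ y, 1 < y → 0 ≤ g y)
    (hsmall : a ≤ C * (π * x) ^ 2) (hlarge : 0 < π → 1 < x → a ≤ g x) :
    a ≤ C * (π ^ 2 + 1) * min (x ^ 2) 1 + (Ioi 1).indicator g x := by
  have hind : 0 ≤ (Ioi 1).indicator g x := indicator_nonneg hg x
  have hmin : 0 ≤ C * (π ^ 2 + 1) * min (x ^ 2) 1 := by positivity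
  rcases le_or_gt x 1 with hx1 | hx1
  · have hsq : x ^ 2 ≤ 1 := by nlinarith
    rw [min_eq_left hsq]
    nlinarith [mul_nonneg hC (sq_nonneg x)]
  rcases lt_or_ge 0 π with hπ | hπ
  · rw [indicator_of_mem (mem_Ioi.2 hx1)]
    linarith [hlarge hπ hx1]
  · have hπx0 : π * x ≤ 0 := mul_nonpos_of_nonpos_of_nonneg hπ (by linarith)
    have hπx : (π * x) ^ 2 ≤ 1 := by nlinarith
    rw [min_eq_right (by nlinarith)]
    nlinarith [mul_le_mul_of_nonneg_left hπx hC, sq_nonneg π]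

lemma integrable_min_sq_one {F : Measure ℝ}
    (hF : ∫⁻ x, ENNReal.ofReal (min (x ^ 2) 1) ∂F ≠ ∞) :
    Integrable (fun x => min (x ^ 2) 1) F := by
  refine ⟨by fun_prop, ?_⟩
  rw [hasFiniteIntegral_iff_ofReal (Eventually.of_forall fun x => by positivity)]
  exact hF.lt_top

lemma integrableOn_one_add_mul_rpow {F : Measure ℝ} {π s : ℝ} (hπ : 0 < π)
    (h : IntegrableOn (fun x => (1 + x) ^ s) (Ioi 1) F) :
    IntegrableOn (fun x => (1 + π * x) ^ s) (Ioi 1) F := by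
  refine (h.const_mul ((min 1 π) ^ s + (max 1 π) ^ s)).mono'
    (Measurable.aestronglyMeasurable (by fun_prop)) ?_
  filter_upwards [ae_restrict_mem measurableSet_Ioi] with x hx
  have hx0 : (0 : ℝ) ≤ x := zero_le_one.trans (le_of_lt hx)
  rw [Real.norm_eq_abs, abs_of_nonneg (Real.rpow_nonneg (by positivity) _)]
  exact Real.one_add_mul_rpow_le hπ hx0 s

lemma integrable_mul_rpow_neg_sub {F : Measure ℝ} {δ π₀ p : ℝ} (hδ : 0 < δ) (hδ1 : δ ≤ 1)
    (hae : ∀ᵐ x ∂F, δ ≤ 1 + π₀ * x)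
    (hFlevy : ∫⁻ x, ENNReal.ofReal (min (x ^ 2) 1) ∂F ≠ ∞)
    (hFx : IntegrableOn (fun x => x) (Ioi (1 : ℝ)) F) (hp : 0 ≤ p) :
    Integrable (fun x => π₀ * x * (1 + π₀ * x) ^ (-p) - π₀ * x) (F.restrict (Ioi (-1))) := by
  have hbound : Integrable (fun x => p * δ ^ (-p - 1) * (π₀ ^ 2 + 1) * min (x ^ 2) 1 +
      (Ioi 1).indicator (fun x => |π₀| * x) x) F :=
    ((integrable_min_sq_one hFlevy).const_mul _).add
      (IntegrableOn.integrable_indicator (hFx.const_mul |π₀|) measurableSet_Ioi)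
  refine hbound.restrict.mono' (by fun_prop) ?_
  filter_upwards [ae_restrict_of_ae hae, ae_restrict_mem measurableSet_Ioi] with x hu hx
  rw [Real.norm_eq_abs]
  exact le_mul_min_sq_one_add_indicator hx (by linarith) (by positivity)
    (fun y hy => mul_nonneg (abs_nonneg _) (by linarith))
    (abs_mul_rpow_neg_sub_le_sq hδ hδ1 hu hp)
    (fun hπ hx1 => by
      rw [abs_of_pos hπ]
      exact abs_mul_rpow_neg_sub_le_self (by positivity) hp)

lemma hasDerivAt_integral_mul_rpow_neg_sub {F : Measure ℝ} {δ π₀ q p : ℝ} (hδ : 0 < δ)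
    (hδ1 : δ ≤ 1) (hae : ∀ᵐ x ∂F, δ ≤ 1 + π₀ * x) (hπ₀ : π₀ ≠ 0)
    (hFlevy : ∫⁻ x, ENNReal.ofReal (min (x ^ 2) 1) ∂F ≠ ∞)
    (hFx : IntegrableOn (fun x => x) (Ioi (1 : ℝ)) F)
    (hFq : IntegrableOn (fun x => (1 + x) ^ (1 - q)) (Ioi (1 : ℝ)) F) (hq : 0 ≤ q)
    (hqp : q < p) :
    Integrable (fun x => π₀ * x * (1 + π₀ * x) ^ (-p) * Real.log (1 + π₀ * x))
        (F.restrict (Ioi (-1))) ∧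
      HasDerivAt (fun r => ∫ x in Ioi (-1 : ℝ), (π₀ * x * (1 + π₀ * x) ^ (-r) - π₀ * x) ∂F)
        (-∫ x in Ioi (-1 : ℝ), π₀ * x * (1 + π₀ * x) ^ (-p) * Real.log (1 + π₀ * x) ∂F) p := by
  set ε := (p - q) / 2 with hε_def
  have hε : 0 < ε := by linarith
  have hball : ∀ r ∈ Metric.ball p ε, q + ε ≤ r ∧ r ≤ p + ε := fun r hr => by
    rw [Metric.mem_ball, Real.dist_eq, abs_lt] at hr
    constructor <;> linarith
  have hbound_int : Integrable (fun x => δ ^ (-(p + ε) - 1) * (π₀ ^ 2 + 1) * min (x ^ 2) 1 +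
      (Ioi 1).indicator (fun x => (1 + |π₀| * x) ^ (1 - q) / ε) x) (F.restrict (Ioi (-1))) :=
    (((integrable_min_sq_one hFlevy).const_mul _).add (IntegrableOn.integrable_indicator
      ((integrableOn_one_add_mul_rpow (abs_pos.2 hπ₀) hFq).div_const ε) measurableSet_Ioi)).restrict
  have hbound : ∀ᵐ x ∂F.restrict (Ioi (-1)), ∀ r ∈ Metric.ball p ε,
      ‖-(π₀ * x * (1 + π₀ * x) ^ (-r) * Real.log (1 + π₀ * x))‖ ≤
        δ ^ (-(p + ε) - 1) * (π₀ ^ 2 + 1) * min (x ^ 2) 1 +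
          (Ioi 1).indicator (fun x => (1 + |π₀| * x) ^ (1 - q) / ε) x := by
    filter_upwards [ae_restrict_of_ae hae, ae_restrict_mem measurableSet_Ioi] with x hu hx r hr
    obtain ⟨hqr, hrp⟩ := hball r hr
    rw [norm_neg, Real.norm_eq_abs]
    exact le_mul_min_sq_one_add_indicator hx (by linarith) (by positivity)
      (fun y hy => div_nonneg (Real.rpow_nonneg
        (add_nonneg zero_le_one (mul_nonneg (abs_nonneg _) (by linarith))) _) hε.le)
      (abs_mul_rpow_neg_mul_log_le_sq hδ hδ1 hu (by linarith) hrp)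
      (fun hπ hx1 => by
        rw [abs_of_pos hπ]
        exact abs_mul_rpow_neg_mul_log_le_rpow (by positivity) hε hqr)
  have hdiff : ∀ᵐ x ∂F.restrict (Ioi (-1)), ∀ r ∈ Metric.ball p ε,
      HasDerivAt (fun s => π₀ * x * (1 + π₀ * x) ^ (-s) - π₀ * x)
        (-(π₀ * x * (1 + π₀ * x) ^ (-r) * Real.log (1 + π₀ * x))) r := by
    filter_upwards [ae_restrict_of_ae hae] with x hu r _
    exact hasDerivAt_mul_rpow_neg_sub (hδ.trans_le hu) r
  obtain ⟨hint, hderiv⟩ := hasDerivAt_integral_of_dominated_loc_of_deriv_le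
    (Metric.ball_mem_nhds p hε)
    (Eventually.of_forall fun r => Measurable.aestronglyMeasurable (by fun_prop))
    (integrable_mul_rpow_neg_sub hδ hδ1 hae hFlevy hFx (by linarith))
    (Measurable.aestronglyMeasurable (by fun_prop)) hbound hbound_int hdiff
  exact ⟨by simpa using hint.neg, by simpa only [integral_neg] using hderiv⟩

theorem stmt13_general (pa pb b c : ℝ) (hpa : 0 < pa)
    (F : Measure ℝ)
    (hFlevy : ∫⁻ x, ENNReal.ofReal (min (x ^ 2) 1) ∂F ≠ ∞)
    (hFx : IntegrableOn (fun x => x) (Ioi (1 : ℝ)) F)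
    (hFq : ∀ q ∈ Ioo pa pb, IntegrableOn (fun x => (1 + x) ^ (1 - q)) (Ioi (1 : ℝ)) F) :
    ∀ π₀ ∈ interior {π : ℝ | F {x | 1 + π * x ≤ 0} = 0}, π₀ ≠ 0 →
      ∀ p ∈ Ioo pa pb,
        IntegrableOn (fun x => π₀ * x * (1 + π₀ * x) ^ (-p) * Real.log (1 + π₀ * x))
          (Ioi (-1 : ℝ)) F ∧
        HasDerivAt
          (fun q => π₀ * b - q * π₀ ^ 2 * c +
            ∫ x in Ioi (-1 : ℝ), (π₀ * x * (1 + π₀ * x) ^ (-q) - π₀ * x) ∂F)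
          (-π₀ ^ 2 * c -
            ∫ x in Ioi (-1 : ℝ), π₀ * x * (1 + π₀ * x) ^ (-p) * Real.log (1 + π₀ * x) ∂F) p ∧
        (-π₀ ^ 2 * c -
            ∫ x in Ioi (-1 : ℝ), π₀ * x * (1 + π₀ * x) ^ (-p) * Real.log (1 + π₀ * x) ∂F
          ≤ -π₀ ^ 2 * c) ∧
        (0 < c →
          -π₀ ^ 2 * c -
            ∫ x in Ioi (-1 : ℝ), π₀ * x * (1 + π₀ * x) ^ (-p) * Real.log (1 + π₀ * x) ∂F
          < 0) := by
  intro π₀ hπ₀A hπ₀ p ⟨hpap, hppb⟩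
  obtain ⟨δ, hδ, hδ1, hae⟩ := exists_pos_le_one_add_mul_ae hπ₀A
  obtain ⟨hint, hderiv⟩ := hasDerivAt_integral_mul_rpow_neg_sub (p := p) hδ hδ1 hae hπ₀ hFlevy hFx
    (hFq ((pa + p) / 2) ⟨by linarith, by linarith⟩) (by linarith) (by linarith)
  have hI : 0 ≤ ∫ x in Ioi (-1 : ℝ), π₀ * x * (1 + π₀ * x) ^ (-p) * Real.log (1 + π₀ * x) ∂F := by
    refine integral_nonneg_of_ae (ae_restrict_of_ae (hae.mono fun x hu => ?_))
    dsimp only [Pi.zero_apply]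
    rw [mul_right_comm]
    exact mul_nonneg (Real.mul_log_one_add_nonneg (by linarith)) (Real.rpow_nonneg (by linarith) _)
  refine ⟨hint, ?_, by linarith, fun hc => ?_⟩
  · exact (((((hasDerivAt_id p).mul_const (π₀ ^ 2)).mul_const c).const_sub (π₀ * b)).add
      hderiv).congr_deriv (by ring)
  · have : 0 < π₀ ^ 2 * c := by positivity
    linarith

theorem stmt13 (pa pb b c : ℝ) (hpa : 0 < pa) (hab : pa < pb) (hc : 0 ≤ c)
    (F : Measure ℝ)
    (hF0 : F {0} = 0)
    (hFlevy : ∫⁻ x, ENNReal.ofReal (min (x ^ 2) 1) ∂F ≠ ∞)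
    (hFneg : F (Iic (-1 : ℝ)) = 0)
    (hFx : IntegrableOn (fun x => x) (Ioi (1 : ℝ)) F)
    (hFq : ∀ q ∈ Ioo pa pb, IntegrableOn (fun x => (1 + x) ^ (1 - q)) (Ioi (1 : ℝ)) F) :
    ∀ π₀ ∈ interior {π : ℝ | F {x | 1 + π * x ≤ 0} = 0}, π₀ ≠ 0 →
      ∀ p ∈ Ioo pa pb,
        IntegrableOn (fun x => π₀ * x * (1 + π₀ * x) ^ (-p) * Real.log (1 + π₀ * x))
          (Ioi (-1 : ℝ)) F ∧
        HasDerivAt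
          (fun q => π₀ * b - q * π₀ ^ 2 * c +
            ∫ x in Ioi (-1 : ℝ), (π₀ * x * (1 + π₀ * x) ^ (-q) - π₀ * x) ∂F)
          (-π₀ ^ 2 * c -
            ∫ x in Ioi (-1 : ℝ), π₀ * x * (1 + π₀ * x) ^ (-p) * Real.log (1 + π₀ * x) ∂F) p ∧
        (-π₀ ^ 2 * c -
            ∫ x in Ioi (-1 : ℝ), π₀ * x * (1 + π₀ * x) ^ (-p) * Real.log (1 + π₀ * x) ∂F
          ≤ -π₀ ^ 2 * c) ∧
        (0 < c →
          -π₀ ^ 2 * c -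
            ∫ x in Ioi (-1 : ℝ), π₀ * x * (1 + π₀ * x) ^ (-p) * Real.log (1 + π₀ * x) ∂F
          < 0) :=
  stmt13_general pa pb b c hpa F hFlevy hFx hFq
end
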